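/- Let H ⊆ G be an inclusion of finite groups and α : Λ(H) → Λ(G) the induced map of inertia groupoids. For a representation ρ of Λ(H) with character χ, the character of the induced representation Ind_α(ρ) = k[Λ(G)] ⊗_{k[Λ(H)]} ρ at a pair of commuting elements (g₁, g₂) of G is χ_ind(g₁,g₂) = (1/|H|) · Σ_{s ∈ G, (s g₁ s⁻¹, s g₂ s⁻¹) ∈ H×H} χ(s g₁ s⁻¹, s g₂ s⁻¹). -/

import Mathlib

open CategoryTheory

/-- The inertia groupoid `Λ(G)` of a group `G`: objects are the elements of `G`,
and morphisms `u ⟶ v` are elements `g ∈ G` with `v = g u g⁻¹`. -/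
def Inertia (G : Type*) : Type _ := G

/-- An element of `G`, regarded as an object of `Λ(G)`. -/
def Inertia.of {G : Type*} (g : G) : Inertia G := g

/-- The element of `G` underlying an object of `Λ(G)`. -/
def Inertia.val {G : Type*} (u : Inertia G) : G := u

instance Inertia.groupoid (G : Type*) [Group G] : Groupoid (Inertia G) where
  Hom u v := { g : G // v.val = g * u.val * g⁻¹ }
  id u := ⟨1, by simp⟩
  comp {u v w} f g := ⟨g.1 * f.1, by
    obtain ⟨gv, hg⟩ := g; obtain ⟨fv, hf⟩ := f
    show w.val = gv * fv * u.val * (gv * fv)⁻¹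
    rw [hg, hf]; group⟩
  id_comp f := Subtype.ext (by simp)
  comp_id f := Subtype.ext (by simp)
  assoc f g h := Subtype.ext (by simp [mul_assoc])
  inv {u v} f := ⟨f.1⁻¹, by
    obtain ⟨fv, hf⟩ := f
    show u.val = fv⁻¹ * v.val * fv⁻¹⁻¹
    rw [hf]; group⟩
  inv_comp f := Subtype.ext (by simp)
  comp_inv f := Subtype.ext (by simp)

/-- The functor `Λ(H) ⥤ Λ(G)` of inertia groupoids induced by the inclusion of a
subgroup `H ⊆ G`. -/
def inertiaIncl {G : Type*} [Group G] (H : Subgroup G) : Inertia H ⥤ Inertia G where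
  obj u := Inertia.of (u.val : G)
  map {u v} f := ⟨(f.1 : G),
    show ((v.val : H) : G) = (f.1 : G) * ((u.val : H) : G) * (f.1 : G)⁻¹ by
      exact_mod_cast congrArg Subtype.val f.2⟩
  map_id u := Subtype.ext rfl
  map_comp f g := Subtype.ext rfl

private lemma conj_comm_helper {G : Type*} [Group G] {g₁ g₂ : G}
    (hc : g₁ * g₂ = g₂ * g₁) (s : G) :
    s * g₁ * s⁻¹ = (s * g₂ * s⁻¹) * (s * g₁ * s⁻¹) * (s * g₂ * s⁻¹)⁻¹ := by
  have h2 : g₂ * g₁ * g₂⁻¹ = g₁ := by rw [← hc, mul_inv_cancel_right]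
  calc s * g₁ * s⁻¹ = s * (g₂ * g₁ * g₂⁻¹) * s⁻¹ := by rw [h2]
    _ = (s * g₂ * s⁻¹) * (s * g₁ * s⁻¹) * (s * g₂ * s⁻¹)⁻¹ := by group

namespace HKR

variable {k : Type} [Field k] {G : Type} [Group G] (H : Subgroup G)
  (ρ : Inertia H ⥤ ModuleCat.{0} k)

/-- morphism constructor in `Λ(H)` -/
def mor {u v : H} (h : H) (hrel : (v : G) = (h : G) * (u : G) * (h : G)⁻¹) :
    (Inertia.of u ⟶ Inertia.of v) :=
  ⟨h, Subtype.ext (by push_cast; exact hrel)⟩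

lemma mor_congr {u v : H} {h₁ h₂ : H} (e : h₁ = h₂) (p₁ : (v : G) = (h₁ : G) * u * (h₁ : G)⁻¹)
    (p₂ : (v : G) = (h₂ : G) * u * (h₂ : G)⁻¹) : mor H h₁ p₁ = mor H h₂ p₂ := by
  subst e; rfl

lemma map_mor_mor {u v w : H} (h₁ h₂ h₃ : H)
    (p₁ : (v : G) = (h₁ : G) * u * (h₁ : G)⁻¹)
    (p₂ : (w : G) = (h₂ : G) * v * (h₂ : G)⁻¹)
    (p₃ : (w : G) = (h₃ : G) * u * (h₃ : G)⁻¹)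
    (hh : h₃ = h₂ * h₁) (x : ρ.obj (Inertia.of u)) :
    ρ.map (mor H h₂ p₂) (ρ.map (mor H h₁ p₁) x) = ρ.map (mor H h₃ p₃) x := by
  subst hh
  have : (mor H h₁ p₁) ≫ (mor H h₂ p₂) = mor H (h₂ * h₁) p₃ := Subtype.ext rfl
  rw [← this, ρ.map_comp]; rfl

lemma map_mor_one {u : H} (p : (u : G) = ((1 : H) : G) * u * ((1 : H) : G)⁻¹)
    (x : ρ.obj (Inertia.of u)) : ρ.map (mor H 1 p) x = x := by
  rw [show mor H 1 p = 𝟙 (Inertia.of u) from Subtype.ext rfl, ρ.map_id]; rfl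

lemma hom_eq_mor {u v : Inertia (H : Type _)} (f : u ⟶ v) :
    f = mor H f.1 (by exact congrArg Subtype.val f.2) := Subtype.ext rfl

/-- membership condition for components -/
abbrev cmem (g s : G) : Prop := s⁻¹ * g * s ∈ H

/-- index type for components -/
abbrev Idx (g : G) : Type := {s : G // cmem H g s}

/-- the object of `Λ(H)` indexing a component -/
abbrev cobj (g : G) (s : Idx H g) : Inertia (H : Type _) :=
  Inertia.of (⟨s.1⁻¹ * g * s.1, s.2⟩ : H)

/-- ambient carrier -/
abbrev Car (g : G) : Type := ∀ s : Idx H g, (ρ.obj (cobj H g s))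

lemma vcongr {g : G} (v : Car H ρ g) {s₁ s₂ : Idx H g} (e : s₁.1 = s₂.1)
    {w : H} {h₁ h₂ : H} (eh : h₁ = h₂)
    (p₁ : (w : G) = (h₁ : G) * ((⟨s₁.1⁻¹ * g * s₁.1, s₁.2⟩ : H) : G) * (h₁ : G)⁻¹)
    (p₂ : (w : G) = (h₂ : G) * ((⟨s₂.1⁻¹ * g * s₂.1, s₂.2⟩ : H) : G) * (h₂ : G)⁻¹) :
    ρ.map (mor H h₁ p₁) (v s₁) = ρ.map (mor H h₂ p₂) (v s₂) := by
  obtain ⟨s₁, m₁⟩ := s₁; obtain ⟨s₂, m₂⟩ := s₂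
  dsimp at e; subst e; subst eh; rfl

/-- the invariance condition -/
def Invt (g : G) (v : Car H ρ g) : Prop :=
  ∀ (s : G) (h : H) (hs : cmem H g s) (hs' : cmem H g (s * (h : G))),
    v ⟨s * (h : G), hs'⟩ =
      ρ.map (mor H h⁻¹ (by push_cast; group)) (v ⟨s, hs⟩)

/-- the submodule of invariant sections -/
def Sub (g : G) : Submodule k (Car H ρ g) where
  carrier := {v | Invt H ρ g v}
  add_mem' := by
    intro a b ha hb s h hs hs'
    have h1 := ha s h hs hs'
    have h2 := hb s h hs hs'
    simp only [Pi.add_apply, h1, h2, map_add]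
  zero_mem' := by intro s h hs hs'; simp
  smul_mem' := by
    intro c a ha s h hs hs'
    have h1 := ha s h hs hs'
    simp only [Pi.smul_apply, h1, map_smul]


lemma memconv {x y : G} (e : x = y) (h : x ∈ H) : y ∈ H := e ▸ h

/-- the underlying map of `FF.map` on ambient carriers -/
def mapCar {g g' : Inertia G} (a : g ⟶ g') : Car H ρ g.val →ₗ[k] Car H ρ g'.val where
  toFun v := fun s =>
    ρ.map (mor H 1 (by push_cast; simp only [a.2]; group))
      (v ⟨a.1⁻¹ * s.1, memconv H (by simp only [a.2]; group) s.2⟩)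
  map_add' v w := by funext s; simp
  map_smul' c v := by funext s; simp

lemma mapCar_mem {g g' : Inertia G} (a : g ⟶ g') {v : Car H ρ g.val}
    (hv : Invt H ρ g.val v) : Invt H ρ g'.val (mapCar H ρ a v) := by
  intro s h hs hs'
  have ha := a.2
  have m0 : cmem H g.val (a.1⁻¹ * (s * (h:G))) :=
    memconv H (x := (s*(h:G))⁻¹ * g'.val * (s*(h:G))) (by simp only [ha]; group) hs'
  have m1 : cmem H g.val ((a.1⁻¹ * s) * (h:G)) :=
    memconv H (x := (s*(h:G))⁻¹ * g'.val * (s*(h:G))) (by simp only [ha]; group) hs'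
  have m2 : cmem H g.val (a.1⁻¹ * s) :=
    memconv H (x := s⁻¹ * g'.val * s) (by simp only [ha]; group) hs
  have p1 : ((⟨(s*(h:G))⁻¹ * g'.val * (s*(h:G)), hs'⟩ : H) : G)
      = ((1:H):G) * ((⟨(a.1⁻¹*(s*(h:G)))⁻¹ * g.val * (a.1⁻¹*(s*(h:G))), m0⟩ : H) : G) * ((1:H):G)⁻¹ := by
    push_cast; simp only [ha]; group
  have p2 : ((⟨(s*(h:G))⁻¹ * g'.val * (s*(h:G)), hs'⟩ : H) : G)
      = ((1:H):G) * ((⟨((a.1⁻¹*s)*(h:G))⁻¹ * g.val * ((a.1⁻¹*s)*(h:G)), m1⟩ : H) : G) * ((1:H):G)⁻¹ := by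
    push_cast; simp only [ha]; group
  have q : ((⟨((a.1⁻¹*s)*(h:G))⁻¹ * g.val * ((a.1⁻¹*s)*(h:G)), m1⟩ : H) : G)
      = ((h⁻¹:H):G) * ((⟨(a.1⁻¹*s)⁻¹ * g.val * (a.1⁻¹*s), m2⟩ : H) : G) * ((h⁻¹:H):G)⁻¹ := by
    push_cast; group
  have r : ((⟨(s*(h:G))⁻¹ * g'.val * (s*(h:G)), hs'⟩ : H) : G)
      = ((h⁻¹:H):G) * ((⟨(a.1⁻¹*s)⁻¹ * g.val * (a.1⁻¹*s), m2⟩ : H) : G) * ((h⁻¹:H):G)⁻¹ := by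
    push_cast; simp only [ha]; group
  have p3 : ((⟨s⁻¹ * g'.val * s, hs⟩ : H) : G)
      = ((1:H):G) * ((⟨(a.1⁻¹*s)⁻¹ * g.val * (a.1⁻¹*s), m2⟩ : H) : G) * ((1:H):G)⁻¹ := by
    push_cast; simp only [ha]; group
  have P : ((⟨(s*(h:G))⁻¹ * g'.val * (s*(h:G)), hs'⟩ : H) : G)
      = ((h⁻¹:H):G) * ((⟨s⁻¹ * g'.val * s, hs⟩ : H) : G) * ((h⁻¹:H):G)⁻¹ := by
    push_cast; group
  calc mapCar H ρ a v ⟨s * (h:G), hs'⟩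
      = ρ.map (mor H 1 p2) (v ⟨(a.1⁻¹*s)*(h:G), m1⟩) :=
        vcongr H ρ v (s₁ := ⟨a.1⁻¹*(s*(h:G)), m0⟩) (s₂ := ⟨(a.1⁻¹*s)*(h:G), m1⟩)
          ((mul_assoc _ _ _).symm) rfl p1 p2
    _ = ρ.map (mor H 1 p2) (ρ.map (mor H h⁻¹ q) (v ⟨a.1⁻¹*s, m2⟩)) := by
        rw [hv (a.1⁻¹*s) h m2 m1]
    _ = ρ.map (mor H h⁻¹ r) (v ⟨a.1⁻¹*s, m2⟩) :=
        map_mor_mor H ρ h⁻¹ 1 h⁻¹ q p2 r (one_mul _).symm _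
    _ = ρ.map (mor H h⁻¹ P) (ρ.map (mor H 1 p3) (v ⟨a.1⁻¹*s, m2⟩)) :=
        (map_mor_mor H ρ 1 h⁻¹ h⁻¹ p3 P r (mul_one _).symm _).symm
    _ = ρ.map (mor H h⁻¹ P) (mapCar H ρ a v ⟨s, hs⟩) := rfl

/-- The explicit model for the left Kan extension. -/
def FF : Inertia G ⥤ ModuleCat.{0} k where
  obj g := ModuleCat.of k (Sub H ρ g.val)
  map {g g'} a := ModuleCat.ofHom ((mapCar H ρ a).restrict (fun v hv => mapCar_mem H ρ a hv) :
    (Sub H ρ g.val) →ₗ[k] (Sub H ρ g'.val))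
  map_id g := by
    refine ModuleCat.hom_ext (LinearMap.ext fun v => Subtype.ext (funext fun s => ?_))
    have m0 : cmem H g.val ((1:G)⁻¹ * s.1) :=
      memconv H (x := s.1⁻¹ * g.val * s.1) (by group) s.2
    have p1 : ((⟨s.1⁻¹ * g.val * s.1, s.2⟩ : H) : G)
        = ((1:H):G) * ((⟨((1:G)⁻¹*s.1)⁻¹ * g.val * ((1:G)⁻¹*s.1), m0⟩ : H) : G) * ((1:H):G)⁻¹ := by
      push_cast; group
    have p2 : ((⟨s.1⁻¹ * g.val * s.1, s.2⟩ : H) : G)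
        = ((1:H):G) * ((⟨s.1⁻¹ * g.val * s.1, s.2⟩ : H) : G) * ((1:H):G)⁻¹ := by
      push_cast; group
    exact (vcongr H ρ v.1 (s₁ := ⟨(1:G)⁻¹ * s.1, m0⟩) (s₂ := s)
      (show (1:G)⁻¹ * s.1 = s.1 by group) rfl p1 p2).trans (map_mor_one H ρ p2 (v.1 s))
  map_comp {g g' g''} a b := by
    refine ModuleCat.hom_ext (LinearMap.ext fun v => Subtype.ext (funext fun s => ?_))
    have ha := a.2; have hb := b.2
    have m0 : cmem H g.val ((b.1*a.1)⁻¹ * s.1) :=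
      memconv H (x := s.1⁻¹ * g''.val * s.1) (by simp only [hb, ha]; group) s.2
    have m1 : cmem H g.val (a.1⁻¹ * (b.1⁻¹ * s.1)) :=
      memconv H (x := s.1⁻¹ * g''.val * s.1) (by simp only [hb, ha]; group) s.2
    have m2 : cmem H g'.val (b.1⁻¹ * s.1) :=
      memconv H (x := s.1⁻¹ * g''.val * s.1) (by simp only [hb]; group) s.2
    have p0 : ((⟨s.1⁻¹ * g''.val * s.1, s.2⟩ : H) : G)
        = ((1:H):G) * ((⟨((b.1*a.1)⁻¹*s.1)⁻¹ * g.val * ((b.1*a.1)⁻¹*s.1), m0⟩ : H) : G) * ((1:H):G)⁻¹ := by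
      push_cast; simp only [hb, ha]; group
    have p1 : ((⟨s.1⁻¹ * g''.val * s.1, s.2⟩ : H) : G)
        = ((1:H):G) * ((⟨(a.1⁻¹*(b.1⁻¹*s.1))⁻¹ * g.val * (a.1⁻¹*(b.1⁻¹*s.1)), m1⟩ : H) : G) * ((1:H):G)⁻¹ := by
      push_cast; simp only [hb, ha]; group
    have p2 : ((⟨s.1⁻¹ * g''.val * s.1, s.2⟩ : H) : G)
        = ((1:H):G) * ((⟨(b.1⁻¹*s.1)⁻¹ * g'.val * (b.1⁻¹*s.1), m2⟩ : H) : G) * ((1:H):G)⁻¹ := by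
      push_cast; simp only [hb]; group
    have p3 : ((⟨(b.1⁻¹*s.1)⁻¹ * g'.val * (b.1⁻¹*s.1), m2⟩ : H) : G)
        = ((1:H):G) * ((⟨(a.1⁻¹*(b.1⁻¹*s.1))⁻¹ * g.val * (a.1⁻¹*(b.1⁻¹*s.1)), m1⟩ : H) : G) * ((1:H):G)⁻¹ := by
      push_cast; simp only [ha]; group
    exact (vcongr H ρ v.1 (s₁ := ⟨(b.1*a.1)⁻¹*s.1, m0⟩) (s₂ := ⟨a.1⁻¹*(b.1⁻¹*s.1), m1⟩)
      (by group) rfl p0 p1).trans (map_mor_mor H ρ 1 1 1 p3 p2 p1 (mul_one 1).symm _).symm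

section Eta
variable [DecidablePred (· ∈ H)]

/-- the underlying function of the unit -/
def etaFun (u : Inertia (H : Type _)) (w : ρ.obj u) : Car H ρ ((u.val : H) : G) :=
  fun s =>
    if h : s.1 ∈ H then
      ρ.map (mor H (u := u.val) (⟨s.1, h⟩ : H)⁻¹ (by push_cast; group)) w
    else 0

lemma etaFun_pos (u : Inertia (H : Type _)) (w : ρ.obj u) (s : Idx H ((u.val : H) : G))
    (h : s.1 ∈ H)
    (p : ((⟨s.1⁻¹ * ((u.val : H) : G) * s.1, s.2⟩ : H) : G)
      = (((⟨s.1, h⟩ : H)⁻¹ : H) : G) * ((u.val : H) : G) * (((⟨s.1, h⟩ : H)⁻¹ : H) : G)⁻¹) :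
    etaFun H ρ u w s = ρ.map (mor H (u := u.val) (⟨s.1, h⟩ : H)⁻¹ p) w := by
  simp only [etaFun, dif_pos h]

lemma etaFun_neg (u : Inertia (H : Type _)) (w : ρ.obj u) (s : Idx H ((u.val : H) : G))
    (h : s.1 ∉ H) : etaFun H ρ u w s = 0 := by
  simp only [etaFun, dif_neg h]

lemma etaFun_mem (u : Inertia (H : Type _)) (w : ρ.obj u) :
    Invt H ρ ((u.val : H) : G) (etaFun H ρ u w) := by
  intro s h hs hs'
  by_cases hsH : s ∈ H
  · have hshH : s * (h : G) ∈ H := mul_mem hsH h.2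
    have pA : ((⟨(s * (h:G))⁻¹ * ((u.val : H) : G) * (s * (h:G)), hs'⟩ : H) : G)
        = (((⟨s * (h:G), hshH⟩ : H)⁻¹ : H) : G) * ((u.val : H) : G)
          * (((⟨s * (h:G), hshH⟩ : H)⁻¹ : H) : G)⁻¹ := by push_cast; group
    have pB : ((⟨s⁻¹ * ((u.val : H) : G) * s, hs⟩ : H) : G)
        = (((⟨s, hsH⟩ : H)⁻¹ : H) : G) * ((u.val : H) : G) * (((⟨s, hsH⟩ : H)⁻¹ : H) : G)⁻¹ := by
      push_cast; group
    have P : ((⟨(s * (h:G))⁻¹ * ((u.val : H) : G) * (s * (h:G)), hs'⟩ : H) : G)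
        = ((h⁻¹ : H) : G) * ((⟨s⁻¹ * ((u.val : H) : G) * s, hs⟩ : H) : G) * ((h⁻¹ : H) : G)⁻¹ := by
      push_cast; group
    have hh : (⟨s * (h:G), hshH⟩ : H)⁻¹ = h⁻¹ * (⟨s, hsH⟩ : H)⁻¹ :=
      Subtype.ext (by push_cast; group)
    calc etaFun H ρ u w ⟨s * (h:G), hs'⟩
        = ρ.map (mor H (⟨s * (h:G), hshH⟩ : H)⁻¹ pA) w :=
          etaFun_pos H ρ u w ⟨s * (h:G), hs'⟩ hshH pA
      _ = ρ.map (mor H h⁻¹ P) (ρ.map (mor H (⟨s, hsH⟩ : H)⁻¹ pB) w) :=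
          (map_mor_mor H ρ (⟨s, hsH⟩ : H)⁻¹ h⁻¹ _ pB P pA hh w).symm
      _ = ρ.map (mor H h⁻¹ P) (etaFun H ρ u w ⟨s, hs⟩) := by
          rw [etaFun_pos H ρ u w ⟨s, hs⟩ hsH pB]
  · have hshH : s * (h : G) ∉ H := fun hc => hsH (by
      have := mul_mem hc (inv_mem h.2)
      rwa [mul_inv_cancel_right] at this)
    rw [etaFun_neg H ρ u w ⟨s * (h:G), hs'⟩ hshH, etaFun_neg H ρ u w ⟨s, hs⟩ hsH, map_zero]

/-- the unit linear map -/
def etaLin (u : Inertia (H : Type _)) : (ρ.obj u : Type) →ₗ[k] Car H ρ ((u.val : H) : G) where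
  toFun := etaFun H ρ u
  map_add' w₁ w₂ := by
    funext s; simp only [etaFun, Pi.add_apply]; split
    · exact map_add _ _ _
    · simp
  map_smul' c w := by
    funext s; simp only [etaFun, Pi.smul_apply]; split
    · exact map_smul _ _ _
    · simp

/-- the unit of the Kan extension -/
def eta : ρ ⟶ inertiaIncl H ⋙ FF H ρ where
  app u := ModuleCat.ofHom (LinearMap.codRestrict (Sub H ρ ((u.val : H) : G)) (etaLin H ρ u)
    (fun w => etaFun_mem H ρ u w))
  naturality {u u'} f := by
    refine ModuleCat.hom_ext (LinearMap.ext fun w => Subtype.ext (funext fun s => ?_))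
    have hfG : ((u'.val : H) : G) = ((f.1 : H) : G) * ((u.val : H) : G) * ((f.1 : H) : G)⁻¹ := by
      exact_mod_cast congrArg Subtype.val f.2
    have M : cmem H ((u.val : H) : G) (((f.1 : H) : G)⁻¹ * s.1) :=
      memconv H (x := s.1⁻¹ * ((u'.val : H) : G) * s.1) (by simp only [hfG]; group) s.2
    have Pm : ((⟨s.1⁻¹ * ((u'.val : H) : G) * s.1, s.2⟩ : H) : G)
        = ((1:H):G) * ((⟨(((f.1 : H) : G)⁻¹ * s.1)⁻¹ * ((u.val : H) : G)
            * (((f.1 : H) : G)⁻¹ * s.1), M⟩ : H) : G) * ((1:H):G)⁻¹ := by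
      push_cast; simp only [hfG]; group
    show etaFun H ρ u' (ρ.map f w) s
        = ρ.map (mor H 1 Pm) (etaFun H ρ u w ⟨((f.1 : H) : G)⁻¹ * s.1, M⟩)
    by_cases hsH : s.1 ∈ H
    · have hsH2 : ((f.1 : H) : G)⁻¹ * s.1 ∈ H := mul_mem (inv_mem f.1.2) hsH
      have pA : ((⟨s.1⁻¹ * ((u'.val : H) : G) * s.1, s.2⟩ : H) : G)
          = (((⟨s.1, hsH⟩ : H)⁻¹ : H) : G) * ((u'.val : H) : G)
            * (((⟨s.1, hsH⟩ : H)⁻¹ : H) : G)⁻¹ := by push_cast; group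
      have pF : ((u'.val : H) : G) = ((f.1 : H) : G) * ((u.val : H) : G) * ((f.1 : H) : G)⁻¹ := hfG
      have pC : ((⟨s.1⁻¹ * ((u'.val : H) : G) * s.1, s.2⟩ : H) : G)
          = ((((⟨s.1, hsH⟩ : H)⁻¹ * f.1) : H) : G) * ((u.val : H) : G)
            * ((((⟨s.1, hsH⟩ : H)⁻¹ * f.1) : H) : G)⁻¹ := by
        push_cast; simp only [hfG]; group
      have pD : ((⟨s.1⁻¹ * ((u'.val : H) : G) * s.1, s.2⟩ : H) : G)
          = (((1 * (⟨((f.1 : H) : G)⁻¹ * s.1, hsH2⟩ : H)⁻¹) : H) : G) * ((u.val : H) : G)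
            * (((1 * (⟨((f.1 : H) : G)⁻¹ * s.1, hsH2⟩ : H)⁻¹) : H) : G)⁻¹ := by
        push_cast; simp only [hfG]; group
      have pB : ((⟨(((f.1 : H) : G)⁻¹ * s.1)⁻¹ * ((u.val : H) : G)
            * (((f.1 : H) : G)⁻¹ * s.1), M⟩ : H) : G)
          = (((⟨((f.1 : H) : G)⁻¹ * s.1, hsH2⟩ : H)⁻¹ : H) : G) * ((u.val : H) : G)
            * (((⟨((f.1 : H) : G)⁻¹ * s.1, hsH2⟩ : H)⁻¹ : H) : G)⁻¹ := by push_cast; group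
      have e : (⟨s.1, hsH⟩ : H)⁻¹ * f.1 = 1 * (⟨((f.1 : H) : G)⁻¹ * s.1, hsH2⟩ : H)⁻¹ :=
        Subtype.ext (by push_cast; group)
      calc etaFun H ρ u' (ρ.map f w) s
          = ρ.map (mor H (⟨s.1, hsH⟩ : H)⁻¹ pA) (ρ.map (mor H f.1 pF) w) :=
            etaFun_pos H ρ u' (ρ.map f w) s hsH pA
        _ = ρ.map (mor H ((⟨s.1, hsH⟩ : H)⁻¹ * f.1) pC) w :=
            map_mor_mor H ρ f.1 (⟨s.1, hsH⟩ : H)⁻¹ _ pF pA pC rfl w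
        _ = ρ.map (mor H (1 * (⟨((f.1 : H) : G)⁻¹ * s.1, hsH2⟩ : H)⁻¹) pD) w :=
            congrArg (fun m => ρ.map m w) (mor_congr H e pC pD)
        _ = ρ.map (mor H 1 Pm) (ρ.map (mor H (⟨((f.1 : H) : G)⁻¹ * s.1, hsH2⟩ : H)⁻¹ pB) w) :=
            (map_mor_mor H ρ (⟨((f.1 : H) : G)⁻¹ * s.1, hsH2⟩ : H)⁻¹ 1 _ pB Pm pD rfl w).symm
        _ = ρ.map (mor H 1 Pm) (etaFun H ρ u w ⟨((f.1 : H) : G)⁻¹ * s.1, M⟩) := by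
            rw [etaFun_pos H ρ u w ⟨((f.1 : H) : G)⁻¹ * s.1, M⟩ hsH2 pB]
    · have hsH2 : ((f.1 : H) : G)⁻¹ * s.1 ∉ H := fun hc => hsH (by
        have := mul_mem f.1.2 hc
        rwa [mul_inv_cancel_left] at this)
      rw [etaFun_neg H ρ u' (ρ.map f w) s hsH,
        etaFun_neg H ρ u w ⟨((f.1 : H) : G)⁻¹ * s.1, M⟩ hsH2, map_zero]

end Eta

section Colimit
open Functor Limits
variable [DecidablePred (· ∈ H)] [Fintype G] [CharZero k]

/-- the canonical morphism in `Λ(G)` from a component rep to the base point -/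
def mG (Y : Inertia G) (s : Idx H Y.val) : (inertiaIncl H).obj (cobj H Y.val s) ⟶ Y :=
  ⟨s.1, by show Y.val = s.1 * (s.1⁻¹ * Y.val * s.1) * s.1⁻¹; group⟩

/-- the costructured arrow object attached to a component -/
def jObj (Y : Inertia G) (s : Idx H Y.val) : CostructuredArrow (inertiaIncl H) Y :=
  CostructuredArrow.mk (mG H Y s)

lemma sum_coset_const {M : Type} [AddCommMonoid M] (s₀ : G) (x : M) :
    (∑ s : G, if s₀⁻¹ * s ∈ H then x else 0) = (Nat.card (H : Type _)) • x := by
  rw [← Finset.sum_filter, Finset.sum_const]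
  congr 1
  rw [Nat.card_eq_fintype_card, ← Fintype.card_subtype]
  exact Fintype.card_congr
    ⟨fun s => (⟨s₀⁻¹ * s.1, s.2⟩ : H),
     fun h => ⟨s₀ * (h : G), by rw [inv_mul_cancel_left]; exact h.2⟩,
     fun s => Subtype.ext (by simp),
     fun h => Subtype.ext (by simp)⟩

lemma inv_card_smul {M : Type} [AddCommGroup M] [Module k M] (x : M) :
    (Nat.card (H : Type _) : k)⁻¹ • ((Nat.card (H : Type _)) • x) = x := by
  rw [← Nat.cast_smul_eq_nsmul k, smul_smul, inv_mul_cancel₀, one_smul]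
  exact_mod_cast Nat.card_pos.ne'

/-- the underlying linear map of `desc` -/
noncomputable def descFun (Y : Inertia G)
    (c : Cocone (CostructuredArrow.proj (inertiaIncl H) Y ⋙ ρ)) :
    (Sub H ρ Y.val) →ₗ[k] c.pt :=
  (Nat.card (H : Type _) : k)⁻¹ •
    ∑ s : G, if hs : cmem H Y.val s then
      (((c.ι.app (jObj H Y ⟨s, hs⟩)).hom : (ρ.obj (cobj H Y.val ⟨s, hs⟩)) →ₗ[k] c.pt) ∘ₗ
        ((LinearMap.proj (⟨s, hs⟩ : Idx H Y.val)) ∘ₗ (Sub H ρ Y.val).subtype))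
    else 0

lemma descFun_apply (Y : Inertia G)
    (c : Cocone (CostructuredArrow.proj (inertiaIncl H) Y ⋙ ρ))
    (v : Sub H ρ Y.val) :
    descFun H ρ Y c v = (Nat.card (H : Type _) : k)⁻¹ •
      ∑ s : G, if hs : cmem H Y.val s then
        c.ι.app (jObj H Y ⟨s, hs⟩) (v.1 ⟨s, hs⟩) else 0 := by
  rw [descFun, LinearMap.smul_apply, LinearMap.sum_apply]
  congr 1
  refine Finset.sum_congr rfl fun s _ => ?_
  split <;> rfl

/-- the left extension data -/
noncomputable def EXT : Functor.LeftExtension (inertiaIncl H) ρ :=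
  Functor.LeftExtension.mk (FF H ρ) (eta H ρ)

set_option maxHeartbeats 1000000 in
lemma fac_aux (Y : Inertia G)
    (c : Cocone (CostructuredArrow.proj (inertiaIncl H) Y ⋙ ρ))
    (j : CostructuredArrow (inertiaIncl H) Y) (w : ρ.obj j.left) :
    descFun H ρ Y c (((EXT H ρ).coconeAt Y).ι.app j w) = c.ι.app j w := by
  have hj : Y.val = j.hom.1 * ((j.left.val : H) : G) * j.hom.1⁻¹ := j.hom.2
  erw [descFun_apply]
  have key : ∀ s : G, (if hs : cmem H Y.val s then
      c.ι.app (jObj H Y ⟨s, hs⟩) ((((EXT H ρ).coconeAt Y).ι.app j w).1 ⟨s, hs⟩) else 0)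
      = if j.hom.1⁻¹ * s ∈ H then c.ι.app j w else 0 := by
    intro s
    by_cases hm : j.hom.1⁻¹ * s ∈ H
    · have hs : cmem H Y.val s :=
        memconv H (x := (j.hom.1⁻¹ * s)⁻¹ * ((j.left.val : H) : G) * (j.hom.1⁻¹ * s))
          (by simp only [hj]; group)
          (mul_mem (mul_mem (inv_mem hm) j.left.val.2) hm)
      have M : cmem H ((j.left.val : H) : G) (j.hom.1⁻¹ * s) :=
        mul_mem (mul_mem (inv_mem hm) j.left.val.2) hm
      have P : ((⟨s⁻¹ * Y.val * s, hs⟩ : H) : G)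
          = ((1:H):G) * ((⟨(j.hom.1⁻¹ * s)⁻¹ * ((j.left.val : H) : G) * (j.hom.1⁻¹ * s), M⟩ : H) : G)
            * ((1:H):G)⁻¹ := by push_cast; simp only [hj]; group
      have pB : ((⟨(j.hom.1⁻¹ * s)⁻¹ * ((j.left.val : H) : G) * (j.hom.1⁻¹ * s), M⟩ : H) : G)
          = (((⟨j.hom.1⁻¹ * s, hm⟩ : H)⁻¹ : H) : G) * ((j.left.val : H) : G)
            * (((⟨j.hom.1⁻¹ * s, hm⟩ : H)⁻¹ : H) : G)⁻¹ := by push_cast; group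
      have pC : ((⟨s⁻¹ * Y.val * s, hs⟩ : H) : G)
          = (((1 * (⟨j.hom.1⁻¹ * s, hm⟩ : H)⁻¹) : H) : G) * ((j.left.val : H) : G)
            * (((1 * (⟨j.hom.1⁻¹ * s, hm⟩ : H)⁻¹) : H) : G)⁻¹ := by
        push_cast; simp only [hj]; group
      have tri : (inertiaIncl H).map (mor H (u := j.left.val) (1 * (⟨j.hom.1⁻¹ * s, hm⟩ : H)⁻¹) pC)
          ≫ mG H Y ⟨s, hs⟩ = j.hom := Subtype.ext (by
        show s * (((1 * (⟨j.hom.1⁻¹ * s, hm⟩ : H)⁻¹) : H) : G) = j.hom.1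
        push_cast; group)
      have hw := ConcreteCategory.congr_hom (c.w (CostructuredArrow.homMk
        (f := j) (f' := jObj H Y ⟨s, hs⟩)
        (mor H (u := j.left.val) (1 * (⟨j.hom.1⁻¹ * s, hm⟩ : H)⁻¹) pC) tri)) w
      rw [dif_pos hs, if_pos hm]
      calc c.ι.app (jObj H Y ⟨s, hs⟩) ((((EXT H ρ).coconeAt Y).ι.app j w).1 ⟨s, hs⟩)
          = c.ι.app (jObj H Y ⟨s, hs⟩) (ρ.map (mor H 1 P)
              (etaFun H ρ j.left w ⟨j.hom.1⁻¹ * s, M⟩)) := rfl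
        _ = c.ι.app (jObj H Y ⟨s, hs⟩) (ρ.map (mor H 1 P)
              (ρ.map (mor H (u := j.left.val) (⟨j.hom.1⁻¹ * s, hm⟩ : H)⁻¹ pB) w)) := by
            rw [etaFun_pos H ρ j.left w ⟨j.hom.1⁻¹ * s, M⟩ hm pB]
        _ = c.ι.app (jObj H Y ⟨s, hs⟩)
              (ρ.map (mor H (u := j.left.val) (1 * (⟨j.hom.1⁻¹ * s, hm⟩ : H)⁻¹) pC) w) := by
            rw [map_mor_mor H ρ (⟨j.hom.1⁻¹ * s, hm⟩ : H)⁻¹ 1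
              (1 * (⟨j.hom.1⁻¹ * s, hm⟩ : H)⁻¹) pB P pC rfl w]
        _ = c.ι.app j w := hw
    · rw [if_neg hm]
      by_cases hs : cmem H Y.val s
      · have M : cmem H ((j.left.val : H) : G) (j.hom.1⁻¹ * s) :=
          memconv H (x := s⁻¹ * Y.val * s) (by simp only [hj]; group) hs
        have P : ((⟨s⁻¹ * Y.val * s, hs⟩ : H) : G)
            = ((1:H):G) * ((⟨(j.hom.1⁻¹ * s)⁻¹ * ((j.left.val : H) : G) * (j.hom.1⁻¹ * s), M⟩ : H) : G)
              * ((1:H):G)⁻¹ := by push_cast; simp only [hj]; group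
        rw [dif_pos hs]
        show c.ι.app (jObj H Y ⟨s, hs⟩) (ρ.map (mor H 1 P)
          (etaFun H ρ j.left w ⟨j.hom.1⁻¹ * s, M⟩)) = 0
        erw [etaFun_neg H ρ j.left w ⟨j.hom.1⁻¹ * s, M⟩ hm, map_zero, map_zero]
      · rw [dif_neg hs]
  rw [Finset.sum_congr rfl fun s _ => key s, sum_coset_const, inv_card_smul]

set_option maxHeartbeats 1000000 in
lemma reconstruct (Y : Inertia G) (v : Sub H ρ Y.val) :
    (Nat.card (H : Type _) : k)⁻¹ • ∑ s : G, (if hs : cmem H Y.val s then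
      ((EXT H ρ).coconeAt Y).ι.app (jObj H Y ⟨s, hs⟩) (v.1 ⟨s, hs⟩) else 0) = v := by
  refine Subtype.ext (funext fun t => ?_)
  show (Sub H ρ Y.val).subtype ((Nat.card (H : Type _) : k)⁻¹ •
      ∑ s : G, (if hs : cmem H Y.val s then
      ((EXT H ρ).coconeAt Y).ι.app (jObj H Y ⟨s, hs⟩) (v.1 ⟨s, hs⟩) else 0)) t = v.1 t
  rw [_root_.map_smul, _root_.map_sum, Pi.smul_apply, Finset.sum_apply]
  have key : ∀ s : G, ((Sub H ρ Y.val).subtype (if hs : cmem H Y.val s then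
      ((EXT H ρ).coconeAt Y).ι.app (jObj H Y ⟨s, hs⟩) (v.1 ⟨s, hs⟩) else 0)) t
      = if t.1⁻¹ * s ∈ H then v.1 t else 0 := by
    intro s
    by_cases hst : t.1⁻¹ * s ∈ H
    · have hs : cmem H Y.val s :=
        memconv H (x := (t.1⁻¹ * s)⁻¹ * (t.1⁻¹ * Y.val * t.1) * (t.1⁻¹ * s)) (by group)
          (mul_mem (mul_mem (inv_mem hst) t.2) hst)
      have hst' : s⁻¹ * t.1 ∈ H := by
        have := inv_mem hst; rwa [mul_inv_rev, inv_inv] at this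
      have M : cmem H ((⟨s⁻¹ * Y.val * s, hs⟩ : H) : G) (s⁻¹ * t.1) :=
        memconv H (x := t.1⁻¹ * Y.val * t.1) (by push_cast; group) t.2
      have m₁ : cmem H Y.val (t.1 * ((⟨t.1⁻¹ * s, hst⟩ : H) : G)) :=
        memconv H (x := s⁻¹ * Y.val * s) (by push_cast; group) hs
      have P : ((⟨t.1⁻¹ * Y.val * t.1, t.2⟩ : H) : G)
          = ((1:H):G) * ((⟨(s⁻¹ * t.1)⁻¹ * ((⟨s⁻¹ * Y.val * s, hs⟩ : H) : G) * (s⁻¹ * t.1), M⟩ : H) : G)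
            * ((1:H):G)⁻¹ := by push_cast; group
      have pB : ((⟨(s⁻¹ * t.1)⁻¹ * ((⟨s⁻¹ * Y.val * s, hs⟩ : H) : G) * (s⁻¹ * t.1), M⟩ : H) : G)
          = (((⟨s⁻¹ * t.1, hst'⟩ : H)⁻¹ : H) : G) * ((⟨s⁻¹ * Y.val * s, hs⟩ : H) : G)
            * (((⟨s⁻¹ * t.1, hst'⟩ : H)⁻¹ : H) : G)⁻¹ := by push_cast; group
      have pC : ((⟨t.1⁻¹ * Y.val * t.1, t.2⟩ : H) : G)
          = (((1 * (⟨s⁻¹ * t.1, hst'⟩ : H)⁻¹) : H) : G) * ((⟨s⁻¹ * Y.val * s, hs⟩ : H) : G)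
            * (((1 * (⟨s⁻¹ * t.1, hst'⟩ : H)⁻¹) : H) : G)⁻¹ := by push_cast; group
      have pC' : ((⟨t.1⁻¹ * Y.val * t.1, t.2⟩ : H) : G)
          = (((1 * (⟨s⁻¹ * t.1, hst'⟩ : H)⁻¹) : H) : G)
            * ((⟨(t.1 * ((⟨t.1⁻¹ * s, hst⟩ : H) : G))⁻¹ * Y.val * (t.1 * ((⟨t.1⁻¹ * s, hst⟩ : H) : G)), m₁⟩ : H) : G)
            * (((1 * (⟨s⁻¹ * t.1, hst'⟩ : H)⁻¹) : H) : G)⁻¹ := by push_cast; group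
      have q : ((⟨(t.1 * ((⟨t.1⁻¹ * s, hst⟩ : H) : G))⁻¹ * Y.val * (t.1 * ((⟨t.1⁻¹ * s, hst⟩ : H) : G)), m₁⟩ : H) : G)
          = (((⟨t.1⁻¹ * s, hst⟩ : H)⁻¹ : H) : G) * ((⟨t.1⁻¹ * Y.val * t.1, t.2⟩ : H) : G)
            * (((⟨t.1⁻¹ * s, hst⟩ : H)⁻¹ : H) : G)⁻¹ := by push_cast; group
      have pO : ((⟨t.1⁻¹ * Y.val * t.1, t.2⟩ : H) : G)
          = ((1:H):G) * ((⟨t.1⁻¹ * Y.val * t.1, t.2⟩ : H) : G) * ((1:H):G)⁻¹ := by push_cast; group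
      have hh : (1:H) = (1 * (⟨s⁻¹ * t.1, hst'⟩ : H)⁻¹) * (⟨t.1⁻¹ * s, hst⟩ : H)⁻¹ :=
        Subtype.ext (by push_cast; group)
      erw [dif_pos hs, if_pos hst]
      calc ((Sub H ρ Y.val).subtype
            (((EXT H ρ).coconeAt Y).ι.app (jObj H Y ⟨s, hs⟩) (v.1 ⟨s, hs⟩))) t
          = ρ.map (mor H 1 P) (etaFun H ρ (cobj H Y.val ⟨s, hs⟩) (v.1 ⟨s, hs⟩)
              ⟨s⁻¹ * t.1, M⟩) := rfl
        _ = ρ.map (mor H 1 P)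
              (ρ.map (mor H (u := (⟨s⁻¹ * Y.val * s, hs⟩ : H)) (⟨s⁻¹ * t.1, hst'⟩ : H)⁻¹ pB)
                (v.1 ⟨s, hs⟩)) := by
            rw [etaFun_pos H ρ (cobj H Y.val ⟨s, hs⟩) (v.1 ⟨s, hs⟩) ⟨s⁻¹ * t.1, M⟩ hst' pB]
            rfl
        _ = ρ.map (mor H (1 * (⟨s⁻¹ * t.1, hst'⟩ : H)⁻¹) pC) (v.1 ⟨s, hs⟩) :=
            map_mor_mor H ρ (⟨s⁻¹ * t.1, hst'⟩ : H)⁻¹ 1 (1 * (⟨s⁻¹ * t.1, hst'⟩ : H)⁻¹)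
              pB P pC rfl _
        _ = ρ.map (mor H (1 * (⟨s⁻¹ * t.1, hst'⟩ : H)⁻¹) pC')
              (v.1 ⟨t.1 * ((⟨t.1⁻¹ * s, hst⟩ : H) : G), m₁⟩) :=
            vcongr H ρ v.1 (s₁ := ⟨s, hs⟩) (s₂ := ⟨t.1 * ((⟨t.1⁻¹ * s, hst⟩ : H) : G), m₁⟩)
              (by push_cast; group) rfl pC pC'
        _ = ρ.map (mor H (1 * (⟨s⁻¹ * t.1, hst'⟩ : H)⁻¹) pC')
              (ρ.map (mor H (⟨t.1⁻¹ * s, hst⟩ : H)⁻¹ q) (v.1 ⟨t.1, t.2⟩)) := by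
            rw [v.2 t.1 (⟨t.1⁻¹ * s, hst⟩ : H) t.2 m₁]
        _ = ρ.map (mor H 1 pO) (v.1 ⟨t.1, t.2⟩) :=
            map_mor_mor H ρ (⟨t.1⁻¹ * s, hst⟩ : H)⁻¹ (1 * (⟨s⁻¹ * t.1, hst'⟩ : H)⁻¹) 1
              q pC' pO hh _
        _ = v.1 t := map_mor_one H ρ pO _
    · rw [if_neg hst]
      by_cases hs : cmem H Y.val s
      · have M : cmem H ((⟨s⁻¹ * Y.val * s, hs⟩ : H) : G) (s⁻¹ * t.1) :=
          memconv H (x := t.1⁻¹ * Y.val * t.1) (by push_cast; group) t.2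
        have P : ((⟨t.1⁻¹ * Y.val * t.1, t.2⟩ : H) : G)
            = ((1:H):G) * ((⟨(s⁻¹ * t.1)⁻¹ * ((⟨s⁻¹ * Y.val * s, hs⟩ : H) : G) * (s⁻¹ * t.1), M⟩ : H) : G)
              * ((1:H):G)⁻¹ := by push_cast; group
        have hst2 : s⁻¹ * t.1 ∉ H := fun hc => hst (by
          have := inv_mem hc; rwa [mul_inv_rev, inv_inv] at this)
        erw [dif_pos hs]
        show ρ.map (mor H 1 P) (etaFun H ρ (cobj H Y.val ⟨s, hs⟩) (v.1 ⟨s, hs⟩)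
          ⟨s⁻¹ * t.1, M⟩) = 0
        erw [etaFun_neg H ρ (cobj H Y.val ⟨s, hs⟩) (v.1 ⟨s, hs⟩) ⟨s⁻¹ * t.1, M⟩ hst2, map_zero]
      · erw [dif_neg hs, map_zero]
        rfl
  rw [Finset.sum_congr rfl fun s _ => key s, sum_coset_const, inv_card_smul]

/-- the colimit structure -/
noncomputable def isColimitAt (Y : Inertia G) :
    (EXT H ρ).IsPointwiseLeftKanExtensionAt Y where
  desc c := ModuleCat.ofHom (descFun H ρ Y c)
  fac c j := ModuleCat.hom_ext (LinearMap.ext fun w => fac_aux H ρ Y c j w)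
  uniq c m hm := by
    refine ModuleCat.hom_ext (LinearMap.ext fun v => ?_)
    calc m v = m ((Nat.card (H : Type _) : k)⁻¹ • ∑ s : G, (if hs : cmem H Y.val s then
          ((EXT H ρ).coconeAt Y).ι.app (jObj H Y ⟨s, hs⟩) (v.1 ⟨s, hs⟩) else 0)) := by
          rw [reconstruct H ρ Y v]
      _ = (Nat.card (H : Type _) : k)⁻¹ • ∑ s : G, (if hs : cmem H Y.val s then
          m (((EXT H ρ).coconeAt Y).ι.app (jObj H Y ⟨s, hs⟩) (v.1 ⟨s, hs⟩)) else 0) := by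
          erw [_root_.map_smul, _root_.map_sum]
          congr 1
          refine Finset.sum_congr rfl fun s _ => ?_
          by_cases hs : cmem H Y.val s
          · erw [dif_pos hs, dif_pos hs]
          · erw [dif_neg hs, dif_neg hs, map_zero]
      _ = (Nat.card (H : Type _) : k)⁻¹ • ∑ s : G, (if hs : cmem H Y.val s then
          c.ι.app (jObj H Y ⟨s, hs⟩) (v.1 ⟨s, hs⟩) else 0) := by
          congr 1
          refine Finset.sum_congr rfl fun s _ => ?_
          by_cases hs : cmem H Y.val s
          · rw [dif_pos hs, dif_pos hs]
            exact ConcreteCategory.congr_hom (hm (jObj H Y ⟨s, hs⟩)) (v.1 ⟨s, hs⟩)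
          · rw [dif_neg hs, dif_neg hs]
      _ = descFun H ρ Y c v := (descFun_apply H ρ Y c v).symm

/-- the pointwise Kan extension structure -/
noncomputable def isPointwise : (EXT H ρ).IsPointwiseLeftKanExtension :=
  fun Y => isColimitAt H ρ Y

end Colimit

section TraceLemmas

lemma trace_pi {ι : Type} [Fintype ι] [DecidableEq ι] (V : ι → Type)
    [∀ i, AddCommGroup (V i)] [∀ i, Module k (V i)] [∀ i, FiniteDimensional k (V i)]
    (f : ((i : ι) → V i) →ₗ[k] ((i : ι) → V i)) :
    LinearMap.trace k _ f = ∑ i, LinearMap.trace k (V i)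
      ((LinearMap.proj i) ∘ₗ (f ∘ₗ (LinearMap.single k V i))) := by
  have hid : (LinearMap.id : ((i : ι) → V i) →ₗ[k] ((i : ι) → V i))
      = ∑ i, (LinearMap.single k V i) ∘ₗ (LinearMap.proj i) :=
    LinearMap.ext fun x => by
      rw [LinearMap.id_apply, LinearMap.sum_apply]
      simp only [LinearMap.comp_apply, LinearMap.proj_apply, LinearMap.coe_single]
      exact (Finset.univ_sum_single x).symm
  have hcomp : f ∘ₗ (∑ i, (LinearMap.single k V i) ∘ₗ (LinearMap.proj i))
      = ∑ i, f ∘ₗ ((LinearMap.single k V i) ∘ₗ (LinearMap.proj i)) :=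
    LinearMap.ext fun x => by
      simp only [LinearMap.comp_apply, LinearMap.sum_apply, map_sum]
  calc LinearMap.trace k _ f
      = LinearMap.trace k _ (f ∘ₗ (∑ i, (LinearMap.single k V i) ∘ₗ (LinearMap.proj i))) := by
        rw [← hid, LinearMap.comp_id]
    _ = LinearMap.trace k _ (∑ i, f ∘ₗ ((LinearMap.single k V i) ∘ₗ (LinearMap.proj i))) := by
        rw [hcomp]
    _ = ∑ i, LinearMap.trace k _ (f ∘ₗ ((LinearMap.single k V i) ∘ₗ (LinearMap.proj i))) :=
        map_sum _ _ _
    _ = ∑ i, LinearMap.trace k (V i) ((LinearMap.proj i) ∘ₗ (f ∘ₗ (LinearMap.single k V i))) := by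
        refine Finset.sum_congr rfl fun i _ => ?_
        rw [← LinearMap.comp_assoc (LinearMap.proj i) (LinearMap.single k V i) f]
        exact LinearMap.trace_comp_comm' (LinearMap.proj i) (f ∘ₗ LinearMap.single k V i)

lemma trace_restrict {M : Type} [AddCommGroup M] [Module k M] [FiniteDimensional k M]
    (p : Submodule k M) (f : M →ₗ[k] M) (hf : ∀ x ∈ p, f x ∈ p)
    (π : M →ₗ[k] p) (hπ : ∀ x : p, π x.1 = x) :
    LinearMap.trace k p (f.restrict hf)
      = LinearMap.trace k M ((p.subtype ∘ₗ f.restrict hf) ∘ₗ π) := by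
  have h1 : π ∘ₗ (p.subtype ∘ₗ f.restrict hf) = f.restrict hf :=
    LinearMap.ext fun x => hπ _
  calc LinearMap.trace k p (f.restrict hf)
      = LinearMap.trace k p (π ∘ₗ (p.subtype ∘ₗ f.restrict hf)) := by rw [h1]
    _ = LinearMap.trace k M ((p.subtype ∘ₗ f.restrict hf) ∘ₗ π) :=
        (LinearMap.trace_comp_comm' π (p.subtype ∘ₗ f.restrict hf)).symm

end TraceLemmas

section TraceSec
variable [DecidablePred (· ∈ H)] [Fintype G] [CharZero k]

lemma sum_idx {M : Type} [AddCommMonoid M] (p : G → Prop) [DecidablePred p]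
    (f : ∀ s, p s → M) :
    ∑ s : {s : G // p s}, f s.1 s.2 = ∑ s : G, (if hs : p s then f s hs else 0) := by
  have h1 : ∑ x ∈ Finset.univ.filter p, (if hs : p x then f x hs else 0)
      = ∑ x : {s : G // p s}, (if hs : p x.1 then f x.1 hs else 0) :=
    Finset.sum_subtype (Finset.univ.filter p) (by simp) _
  have h2 : ∑ x : G, (if hs : p x then f x hs else 0)
      = ∑ x ∈ Finset.univ.filter p, (if hs : p x then f x hs else 0) :=
    (Finset.sum_filter_of_ne (fun x _ hF => by
      by_contra hp; exact hF (dif_neg hp))).symm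
  rw [h2, h1]
  exact (Finset.sum_congr rfl fun x _ => by rw [dif_pos x.2]).symm

lemma trace_map_congr {u₁ u₂ : H} (e : u₁ = u₂) (m₁ : Inertia.of u₁ ⟶ Inertia.of u₁)
    (m₂ : Inertia.of u₂ ⟶ Inertia.of u₂) (hval : ((m₁.1 : H) : G) = ((m₂.1 : H) : G)) :
    LinearMap.trace k (ρ.obj (Inertia.of u₁)) (ρ.map m₁).hom
      = LinearMap.trace k (ρ.obj (Inertia.of u₂)) (ρ.map m₂).hom := by
  subst e
  have : m₁ = m₂ := Subtype.ext (Subtype.ext hval)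
  rw [this]

lemma avg_mem' (g : G) (s : Idx H g) (h : (H : Type _)) : cmem H g (s.1 * (h : G)) :=
  memconv H (x := ((h : G))⁻¹ * (s.1⁻¹ * g * s.1) * (h : G)) (by group)
    (mul_mem (mul_mem (inv_mem h.2) s.2) h.2)

lemma avg_pf (g : G) (s : Idx H g) (h : (H : Type _)) :
    ((⟨s.1⁻¹ * g * s.1, s.2⟩ : H) : G)
      = (h : G) * ((⟨(s.1 * (h : G))⁻¹ * g * (s.1 * (h : G)), avg_mem' H g s h⟩ : H) : G)
        * ((h : G))⁻¹ := by push_cast; group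

/-- averaging projector onto invariant sections -/
noncomputable def avg (g : G) : Car H ρ g →ₗ[k] Car H ρ g :=
  LinearMap.pi fun s => (Nat.card (H : Type _) : k)⁻¹ •
    ∑ h : (H : Type _), ((ρ.map (mor H h (avg_pf H g s h))).hom :
        (ρ.obj (cobj H g ⟨s.1 * (h : G), avg_mem' H g s h⟩)) →ₗ[k] (ρ.obj (cobj H g s))) ∘ₗ
      LinearMap.proj (⟨s.1 * (h : G), avg_mem' H g s h⟩ : Idx H g)

lemma avg_apply (g : G) (v : Car H ρ g) (s : Idx H g) :
    avg H ρ g v s = (Nat.card (H : Type _) : k)⁻¹ •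
      ∑ h : (H : Type _), ρ.map (mor H h (avg_pf H g s h))
        (v ⟨s.1 * (h : G), avg_mem' H g s h⟩) := by
  simp only [avg, LinearMap.pi_apply, LinearMap.smul_apply, LinearMap.sum_apply,
    LinearMap.comp_apply, LinearMap.proj_apply]

set_option maxHeartbeats 1000000 in
lemma avg_invt (g : G) (v : Car H ρ g) : Invt H ρ g (avg H ρ g v) := by
  intro s h₀ hs hs'
  rw [avg_apply, avg_apply, _root_.map_smul, _root_.map_sum]
  congr 1
  refine Fintype.sum_equiv (Equiv.mulLeft h₀) _ _ (fun x => ?_)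
  have myP : ((⟨(s * (h₀:G))⁻¹ * g * (s * (h₀:G)), hs'⟩ : H) : G)
      = ((h₀⁻¹ : H) : G) * ((⟨s⁻¹ * g * s, hs⟩ : H) : G) * ((h₀⁻¹ : H) : G)⁻¹ := by
    push_cast; group
  have pX : ((⟨(s * (h₀:G))⁻¹ * g * (s * (h₀:G)), hs'⟩ : H) : G)
      = ((x : H) : G)
        * ((⟨((⟨s, hs⟩ : Idx H g).1 * ((h₀ * x : H) : G))⁻¹ * g
              * ((⟨s, hs⟩ : Idx H g).1 * ((h₀ * x : H) : G)),
            avg_mem' H g ⟨s, hs⟩ (h₀ * x)⟩ : H) : G)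
        * ((x : H) : G)⁻¹ := by push_cast; group
  have e1 : (⟨s * (h₀:G), hs'⟩ : Idx H g).1 * ((x : H) : G)
      = (⟨s, hs⟩ : Idx H g).1 * ((h₀ * x : H) : G) := by push_cast; group
  have hhx : x = h₀⁻¹ * (h₀ * x) := (inv_mul_cancel_left h₀ x).symm
  exact (vcongr H ρ v
      (s₁ := ⟨(⟨s * (h₀:G), hs'⟩ : Idx H g).1 * ((x : H) : G),
        avg_mem' H g ⟨s * (h₀:G), hs'⟩ x⟩)
      (s₂ := ⟨(⟨s, hs⟩ : Idx H g).1 * ((h₀ * x : H) : G), avg_mem' H g ⟨s, hs⟩ (h₀ * x)⟩)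
      e1 rfl (avg_pf H g ⟨s * (h₀:G), hs'⟩ x) pX).trans
    (map_mor_mor H ρ (h₀ * x) h₀⁻¹ x (avg_pf H g ⟨s, hs⟩ (h₀ * x)) myP pX hhx _).symm

lemma avg_of_invt (g : G) (v : Car H ρ g) (hv : Invt H ρ g v) : avg H ρ g v = v := by
  funext s
  rw [avg_apply]
  have key : ∀ h : (H : Type _),
      ρ.map (mor H h (avg_pf H g s h)) (v ⟨s.1 * (h:G), avg_mem' H g s h⟩) = v s := by
    intro h
    have q : ((⟨(s.1 * (h:G))⁻¹ * g * (s.1 * (h:G)), avg_mem' H g s h⟩ : H) : G)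
        = ((h⁻¹ : H) : G) * ((⟨s.1⁻¹ * g * s.1, s.2⟩ : H) : G) * ((h⁻¹ : H) : G)⁻¹ := by
      push_cast; group
    have pO : ((⟨s.1⁻¹ * g * s.1, s.2⟩ : H) : G)
        = ((1:H):G) * ((⟨s.1⁻¹ * g * s.1, s.2⟩ : H) : G) * ((1:H):G)⁻¹ := by push_cast; group
    have hh : (1:H) = h * h⁻¹ := (mul_inv_cancel h).symm
    calc ρ.map (mor H h (avg_pf H g s h)) (v ⟨s.1 * (h:G), avg_mem' H g s h⟩)
        = ρ.map (mor H h (avg_pf H g s h)) (ρ.map (mor H h⁻¹ q) (v ⟨s.1, s.2⟩)) := by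
          rw [hv s.1 h s.2 (avg_mem' H g s h)]
      _ = ρ.map (mor H 1 pO) (v ⟨s.1, s.2⟩) :=
          map_mor_mor H ρ h⁻¹ h 1 q (avg_pf H g s h) pO hh _
      _ = v s := map_mor_one H ρ pO _
  rw [Finset.sum_congr rfl fun h _ => key h, Finset.sum_const, Finset.card_univ,
    ← Nat.card_eq_fintype_card, inv_card_smul]

variable [∀ u : Inertia (H : Type _), FiniteDimensional k (ρ.obj u)]

private lemma conj_block {a g s : G} (hg : g = a * g * a⁻¹) :
    s⁻¹ * g * s = (s⁻¹ * a * s) * (s⁻¹ * g * s) * (s⁻¹ * a * s)⁻¹ := by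
  calc s⁻¹ * g * s = s⁻¹ * (a * g * a⁻¹) * s := by rw [← hg]
    _ = (s⁻¹ * a * s) * (s⁻¹ * g * s) * (s⁻¹ * a * s)⁻¹ := by group

private lemma conj_blockA {a g s : G} (hg : g = a * g * a⁻¹) :
    s⁻¹ * g * s = (a⁻¹ * s)⁻¹ * g * (a⁻¹ * s) := by
  calc s⁻¹ * g * s = s⁻¹ * (a * g * a⁻¹) * s := by rw [← hg]
    _ = (a⁻¹ * s)⁻¹ * g * (a⁻¹ * s) := by group

private lemma conj_blockB {a g s : G} (hg : g = a * g * a⁻¹) :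
    s⁻¹ * g * s = 1 * ((a⁻¹ * s)⁻¹ * g * (a⁻¹ * s)) * 1⁻¹ := by
  calc s⁻¹ * g * s = s⁻¹ * (a * g * a⁻¹) * s := by rw [← hg]
    _ = 1 * ((a⁻¹ * s)⁻¹ * g * (a⁻¹ * s)) * 1⁻¹ := by group

private lemma conj_blockD {a g s : G} (hg : g = a * g * a⁻¹) :
    s⁻¹ * g * s = (1 * (s⁻¹ * a * s)) * (s⁻¹ * g * s) * (1 * (s⁻¹ * a * s))⁻¹ := by
  calc s⁻¹ * g * s = s⁻¹ * (a * g * a⁻¹) * s := by rw [← hg]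
    _ = (1 * (s⁻¹ * a * s)) * (s⁻¹ * g * s) * (1 * (s⁻¹ * a * s))⁻¹ := by group

lemma blockPf (g₁ : G) (m : Inertia.of g₁ ⟶ Inertia.of g₁) (s : G)
    (hs : cmem H g₁ s) (hc : s⁻¹ * m.1 * s ∈ H) :
    ((⟨s⁻¹ * g₁ * s, hs⟩ : H) : G)
      = ((⟨s⁻¹ * m.1 * s, hc⟩ : H) : G) * ((⟨s⁻¹ * g₁ * s, hs⟩ : H) : G)
        * ((⟨s⁻¹ * m.1 * s, hc⟩ : H) : G)⁻¹ := by
  push_cast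
  exact conj_block (m.2 : g₁ = m.1 * g₁ * m.1⁻¹)

set_option maxHeartbeats 1000000 in
lemma trace_FF [DecidableEq G] (g₁ : G) (m : Inertia.of g₁ ⟶ Inertia.of g₁) :
    LinearMap.trace k ((FF H ρ).obj (Inertia.of g₁)) ((FF H ρ).map m).hom
      = (Nat.card (H : Type _) : k)⁻¹ * ∑ s : G, (if hs : cmem H g₁ s then
          (if hc : s⁻¹ * m.1 * s ∈ H then
            LinearMap.trace k (ρ.obj (cobj H g₁ ⟨s, hs⟩))
              (ρ.map (mor H (u := (⟨s⁻¹ * g₁ * s, hs⟩ : H)) (v := (⟨s⁻¹ * g₁ * s, hs⟩ : H))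
                (⟨s⁻¹ * m.1 * s, hc⟩ : H) (blockPf H g₁ m s hs hc))).hom
          else 0) else 0) := by
  have hres : LinearMap.trace k ((FF H ρ).obj (Inertia.of g₁)) ((FF H ρ).map m).hom
      = LinearMap.trace k (Car H ρ g₁) ((mapCar H ρ m) ∘ₗ (avg H ρ g₁)) := by
    have h0 := trace_restrict (Sub H ρ g₁) (mapCar H ρ m)
      (fun v hv => mapCar_mem H ρ m hv)
      (LinearMap.codRestrict (Sub H ρ g₁) (avg H ρ g₁) (fun v => avg_invt H ρ g₁ v))
      (fun x => Subtype.ext (avg_of_invt H ρ g₁ x.1 x.2))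
    refine h0.trans ?_
    congr 1
  have hpi := @trace_pi k _ (Idx H g₁) _ _ (fun s : Idx H g₁ => (ρ.obj (cobj H g₁ s) : Type))
    (fun _ => inferInstance) (fun _ => inferInstance) (fun _ => inferInstance)
    ((mapCar H ρ m) ∘ₗ (avg H ρ g₁))
  have block : ∀ s : Idx H g₁,
      ((LinearMap.proj s) ∘ₗ (((mapCar H ρ m) ∘ₗ (avg H ρ g₁)) ∘ₗ
        (LinearMap.single k (fun s : Idx H g₁ => (ρ.obj (cobj H g₁ s) : Type)) s)))
      = if hc : s.1⁻¹ * m.1 * s.1 ∈ H then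
          (Nat.card (H : Type _) : k)⁻¹ •
            ((ρ.map (mor H (u := (⟨s.1⁻¹ * g₁ * s.1, s.2⟩ : H)) (v := (⟨s.1⁻¹ * g₁ * s.1, s.2⟩ : H))
              (⟨s.1⁻¹ * m.1 * s.1, hc⟩ : H) (blockPf H g₁ m s.1 s.2 hc))).hom :
              (ρ.obj (cobj H g₁ s)) →ₗ[k] (ρ.obj (cobj H g₁ s)))
        else 0 := by
    intro s
    have MA : cmem H g₁ (m.1⁻¹ * s.1) :=
      memconv H (x := s.1⁻¹ * g₁ * s.1)
        (conj_blockA (m.2 : g₁ = m.1 * g₁ * m.1⁻¹)) s.2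
    have PA : ((⟨s.1⁻¹ * g₁ * s.1, s.2⟩ : H) : G)
        = ((1:H):G) * ((⟨(m.1⁻¹ * s.1)⁻¹ * g₁ * (m.1⁻¹ * s.1), MA⟩ : H) : G) * ((1:H):G)⁻¹ := by
      push_cast; exact conj_blockB (m.2 : g₁ = m.1 * g₁ * m.1⁻¹)
    refine LinearMap.ext fun x => ?_
    have hstart : ((LinearMap.proj s) ∘ₗ (((mapCar H ρ m) ∘ₗ (avg H ρ g₁)) ∘ₗ
        (LinearMap.single k (fun s : Idx H g₁ => (ρ.obj (cobj H g₁ s) : Type)) s))) x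
        = ρ.map (mor H 1 PA) (avg H ρ g₁ (Pi.single s x) ⟨m.1⁻¹ * s.1, MA⟩) := rfl
    rw [hstart, avg_apply, _root_.map_smul, _root_.map_sum]
    by_cases hc : s.1⁻¹ * m.1 * s.1 ∈ H
    · have hval : ∀ b : (H : Type _), b ≠ (⟨s.1⁻¹ * m.1 * s.1, hc⟩ : H) →
          ρ.map (mor H 1 PA) (ρ.map (mor H b (avg_pf H g₁ ⟨m.1⁻¹ * s.1, MA⟩ b))
            ((Pi.single s x : Car H ρ g₁)
              ⟨(⟨m.1⁻¹ * s.1, MA⟩ : Idx H g₁).1 * (b : G), avg_mem' H g₁ ⟨m.1⁻¹ * s.1, MA⟩ b⟩))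
          = 0 := by
        intro b hb
        have hne : (⟨(⟨m.1⁻¹ * s.1, MA⟩ : Idx H g₁).1 * (b : G),
            avg_mem' H g₁ ⟨m.1⁻¹ * s.1, MA⟩ b⟩ : Idx H g₁) ≠ s := by
          intro hEq
          refine hb (Subtype.ext ?_)
          have hv : m.1⁻¹ * s.1 * (b : G) = s.1 := congrArg Subtype.val hEq
          calc (b : G) = (m.1⁻¹ * s.1)⁻¹ * (m.1⁻¹ * s.1 * (b : G)) := by group
            _ = (m.1⁻¹ * s.1)⁻¹ * s.1 := by rw [hv]
            _ = s.1⁻¹ * m.1 * s.1 := by group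
        rw [Pi.single_eq_of_ne hne, map_zero, map_zero]
      rw [dif_pos hc]
      have hsum := Finset.sum_eq_single_of_mem (⟨s.1⁻¹ * m.1 * s.1, hc⟩ : H)
        (Finset.mem_univ _) (fun b _ hb => hval b hb)
      rw [hsum]
      have e1 : (⟨m.1⁻¹ * s.1, MA⟩ : Idx H g₁).1 * (((⟨s.1⁻¹ * m.1 * s.1, hc⟩ : H)) : G)
          = (s : Idx H g₁).1 := by push_cast; group
      have pX : ((⟨(⟨m.1⁻¹ * s.1, MA⟩ : Idx H g₁).1⁻¹ * g₁ * (⟨m.1⁻¹ * s.1, MA⟩ : Idx H g₁).1,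
            (⟨m.1⁻¹ * s.1, MA⟩ : Idx H g₁).2⟩ : H) : G)
          = (((⟨s.1⁻¹ * m.1 * s.1, hc⟩ : H)) : G)
            * ((⟨s.1⁻¹ * g₁ * s.1, s.2⟩ : H) : G)
            * (((⟨s.1⁻¹ * m.1 * s.1, hc⟩ : H)) : G)⁻¹ := by
        push_cast; group
      have pY : ((⟨s.1⁻¹ * g₁ * s.1, s.2⟩ : H) : G)
          = (((1 * (⟨s.1⁻¹ * m.1 * s.1, hc⟩ : H)) : H) : G)
            * ((⟨s.1⁻¹ * g₁ * s.1, s.2⟩ : H) : G)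
            * (((1 * (⟨s.1⁻¹ * m.1 * s.1, hc⟩ : H)) : H) : G)⁻¹ := by
        push_cast
        exact conj_blockD (m.2 : g₁ = m.1 * g₁ * m.1⁻¹)
      have step := vcongr H ρ (Pi.single s x : Car H ρ g₁)
        (s₁ := ⟨(⟨m.1⁻¹ * s.1, MA⟩ : Idx H g₁).1 * (((⟨s.1⁻¹ * m.1 * s.1, hc⟩ : H)) : G),
          avg_mem' H g₁ ⟨m.1⁻¹ * s.1, MA⟩ (⟨s.1⁻¹ * m.1 * s.1, hc⟩ : H)⟩)
        (s₂ := s) e1 (rfl : (⟨s.1⁻¹ * m.1 * s.1, hc⟩ : H) = _)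
        (avg_pf H g₁ ⟨m.1⁻¹ * s.1, MA⟩ (⟨s.1⁻¹ * m.1 * s.1, hc⟩ : H)) pX
      rw [step, Pi.single_eq_same]
      rw [map_mor_mor H ρ (⟨s.1⁻¹ * m.1 * s.1, hc⟩ : H) 1 (1 * (⟨s.1⁻¹ * m.1 * s.1, hc⟩ : H))
        pX PA pY rfl x]
      rw [mor_congr H (one_mul (⟨s.1⁻¹ * m.1 * s.1, hc⟩ : H)) pY (blockPf H g₁ m s.1 s.2 hc)]
      rfl
    · rw [dif_neg hc]
      have hval : ∀ b : (H : Type _),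
          ρ.map (mor H 1 PA) (ρ.map (mor H b (avg_pf H g₁ ⟨m.1⁻¹ * s.1, MA⟩ b))
            ((Pi.single s x : Car H ρ g₁)
              ⟨(⟨m.1⁻¹ * s.1, MA⟩ : Idx H g₁).1 * (b : G), avg_mem' H g₁ ⟨m.1⁻¹ * s.1, MA⟩ b⟩))
          = 0 := by
        intro b
        have hne : (⟨(⟨m.1⁻¹ * s.1, MA⟩ : Idx H g₁).1 * (b : G),
            avg_mem' H g₁ ⟨m.1⁻¹ * s.1, MA⟩ b⟩ : Idx H g₁) ≠ s := by
          intro hEq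
          refine hc ?_
          have hv : m.1⁻¹ * s.1 * (b : G) = s.1 := congrArg Subtype.val hEq
          have hbv : (b : G) = s.1⁻¹ * m.1 * s.1 := by
            calc (b : G) = (m.1⁻¹ * s.1)⁻¹ * (m.1⁻¹ * s.1 * (b : G)) := by group
              _ = (m.1⁻¹ * s.1)⁻¹ * s.1 := by rw [hv]
              _ = s.1⁻¹ * m.1 * s.1 := by group
          exact hbv ▸ b.2
        rw [Pi.single_eq_of_ne hne, map_zero, map_zero]
      rw [Finset.sum_eq_zero (fun b _ => hval b), smul_zero]
      rfl
  erw [hres, hpi]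
  have hsum2 : ∀ s : Idx H g₁,
      LinearMap.trace k (ρ.obj (cobj H g₁ s))
        ((LinearMap.proj s) ∘ₗ (((mapCar H ρ m) ∘ₗ (avg H ρ g₁)) ∘ₗ
          (LinearMap.single k (fun s : Idx H g₁ => (ρ.obj (cobj H g₁ s) : Type)) s)))
      = if hc : s.1⁻¹ * m.1 * s.1 ∈ H then
          (Nat.card (H : Type _) : k)⁻¹ *
            LinearMap.trace k (ρ.obj (cobj H g₁ s))
              (ρ.map (mor H (u := (⟨s.1⁻¹ * g₁ * s.1, s.2⟩ : H)) (v := (⟨s.1⁻¹ * g₁ * s.1, s.2⟩ : H))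
                (⟨s.1⁻¹ * m.1 * s.1, hc⟩ : H) (blockPf H g₁ m s.1 s.2 hc))).hom
        else 0 := by
    intro s
    erw [block s]
    by_cases hc : s.1⁻¹ * m.1 * s.1 ∈ H
    · rw [dif_pos hc, dif_pos hc, _root_.map_smul, smul_eq_mul]
    · rw [dif_neg hc, dif_neg hc, map_zero]
  erw [Finset.sum_congr rfl fun s _ => hsum2 s]
  rw [show (∑ s : Idx H g₁, if hc : s.1⁻¹ * m.1 * s.1 ∈ H then
      (Nat.card (H : Type _) : k)⁻¹ *
        LinearMap.trace k (ρ.obj (cobj H g₁ s))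
          (ρ.map (mor H (u := (⟨s.1⁻¹ * g₁ * s.1, s.2⟩ : H)) (v := (⟨s.1⁻¹ * g₁ * s.1, s.2⟩ : H))
            (⟨s.1⁻¹ * m.1 * s.1, hc⟩ : H) (blockPf H g₁ m s.1 s.2 hc))).hom
      else 0)
    = ∑ s : G, (if hs : cmem H g₁ s then (if hc : s⁻¹ * m.1 * s ∈ H then
        (Nat.card (H : Type _) : k)⁻¹ *
          LinearMap.trace k (ρ.obj (cobj H g₁ ⟨s, hs⟩))
            (ρ.map (mor H (u := (⟨s⁻¹ * g₁ * s, hs⟩ : H)) (v := (⟨s⁻¹ * g₁ * s, hs⟩ : H))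
              (⟨s⁻¹ * m.1 * s, hc⟩ : H) (blockPf H g₁ m s hs hc))).hom
      else 0) else 0) from sum_idx (cmem H g₁)
      (fun a ha => if hc : a⁻¹ * m.1 * a ∈ H then
        (Nat.card (H : Type _) : k)⁻¹ *
          LinearMap.trace k (ρ.obj (cobj H g₁ ⟨a, ha⟩))
            (ρ.map (mor H (u := (⟨a⁻¹ * g₁ * a, ha⟩ : H)) (v := (⟨a⁻¹ * g₁ * a, ha⟩ : H))
              (⟨a⁻¹ * m.1 * a, hc⟩ : H) (blockPf H g₁ m a ha hc))).hom
      else 0)]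
  rw [Finset.mul_sum]
  refine Finset.sum_congr rfl fun s _ => ?_
  by_cases hs : cmem H g₁ s
  · rw [dif_pos hs, dif_pos hs]
    by_cases hc : s⁻¹ * m.1 * s ∈ H
    · rw [dif_pos hc, dif_pos hc]
    · rw [dif_neg hc, dif_neg hc, mul_zero]
  · rw [dif_neg hs, dif_neg hs, mul_zero]

end TraceSec

end HKR

set_option maxHeartbeats 1000000 in
/-- **Hopkins–Kuhn–Ravenel induction formula for inertia groupoids.**
Let `H ⊆ G` be finite groups, `α : Λ(H) ⥤ Λ(G)` the induced map of inertia groupoids,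
and `ρ` a finite-dimensional representation of `Λ(H)` over a field `k` of
characteristic `0`.  The character of the induced representation
`Ind_α ρ = k[Λ(G)] ⊗_{k[Λ(H)]} ρ` (realized as the left Kan extension of `ρ` along `α`)
at a pair of commuting elements `(g₁, g₂)` of `G` is
`χ_ind(g₁,g₂) = |H|⁻¹ ∑_{s ∈ G, (s g₁ s⁻¹, s g₂ s⁻¹) ∈ H × H} χ(s g₁ s⁻¹, s g₂ s⁻¹)`. -/
theorem character_of_induced_inertia_rep
    (k : Type) [Field k] [CharZero k]
    (G : Type) [Group G] [Fintype G] (H : Subgroup G) [DecidablePred (· ∈ H)]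
    (ρ : Inertia H ⥤ ModuleCat.{0} k)
    [∀ u : Inertia H, FiniteDimensional k (ρ.obj u)]
    (g₁ g₂ : G) (hc : g₁ * g₂ = g₂ * g₁) :
    LinearMap.trace k (((inertiaIncl H).lan.obj ρ).obj (Inertia.of g₁))
        ((((inertiaIncl H).lan.obj ρ)).map
          (⟨g₂, show g₁ = g₂ * g₁ * g₂⁻¹ by rw [← hc, mul_inv_cancel_right]⟩ :
            Inertia.of g₁ ⟶ Inertia.of g₁)).hom =
      (Nat.card H : k)⁻¹ *
        ∑ s : G, if hs : (s * g₁ * s⁻¹ ∈ H ∧ s * g₂ * s⁻¹ ∈ H) then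
          LinearMap.trace k (ρ.obj (Inertia.of (⟨s * g₁ * s⁻¹, hs.1⟩ : H)))
            (ρ.map (⟨(⟨s * g₂ * s⁻¹, hs.2⟩ : H),
              show (⟨s * g₁ * s⁻¹, hs.1⟩ : H) = ⟨s * g₂ * s⁻¹, hs.2⟩ *
                  ⟨s * g₁ * s⁻¹, hs.1⟩ * (⟨s * g₂ * s⁻¹, hs.2⟩ : H)⁻¹ from
                Subtype.ext (by push_cast; exact conj_comm_helper hc s)⟩ :
                  Inertia.of (⟨s * g₁ * s⁻¹, hs.1⟩ : H) ⟶
                    Inertia.of (⟨s * g₁ * s⁻¹, hs.1⟩ : H))).hom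
        else 0 := by
  letI : DecidableEq G := Classical.decEq G
  haveI : (HKR.FF H ρ).IsLeftKanExtension (HKR.eta H ρ) :=
    (HKR.isPointwise H ρ).isLeftKanExtension
  let mm : Inertia.of g₁ ⟶ Inertia.of g₁ :=
    ⟨g₂, show g₁ = g₂ * g₁ * g₂⁻¹ by rw [← hc, mul_inv_cancel_right]⟩
  let e : HKR.FF H ρ ≅ (inertiaIncl H).lan.obj ρ :=
    Functor.leftKanExtensionUnique (HKR.FF H ρ) (HKR.eta H ρ)
      ((inertiaIncl H).lan.obj ρ) ((inertiaIncl H).lanUnit.app ρ)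
  have hmap : e.inv.app (Inertia.of g₁) ≫ (HKR.FF H ρ).map mm ≫ e.hom.app (Inertia.of g₁)
      = ((inertiaIncl H).lan.obj ρ).map mm := by
    rw [e.hom.naturality mm, Iso.inv_hom_id_app_assoc]
  have htr : LinearMap.trace k (((inertiaIncl H).lan.obj ρ).obj (Inertia.of g₁))
        (((inertiaIncl H).lan.obj ρ).map mm).hom
      = LinearMap.trace k ((HKR.FF H ρ).obj (Inertia.of g₁)) ((HKR.FF H ρ).map mm).hom := by
    rw [← hmap]
    exact LinearMap.trace_conj' ((HKR.FF H ρ).map mm).hom (e.app (Inertia.of g₁)).toLinearEquiv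
  have main := HKR.trace_FF H ρ g₁ mm
  refine (htr.trans main).trans ?_
  congr 1
  refine Fintype.sum_equiv (Equiv.inv G) _ _ (fun x => ?_)
  simp only [Equiv.inv_apply]
  by_cases h1x : HKR.cmem H g₁ x
  · by_cases h2x : x⁻¹ * mm.1 * x ∈ H
    · have c1 : x⁻¹ * g₁ * x⁻¹⁻¹ ∈ H :=
        HKR.memconv H (x := x⁻¹ * g₁ * x) (by group) h1x
      have c2 : x⁻¹ * g₂ * x⁻¹⁻¹ ∈ H :=
        HKR.memconv H (x := x⁻¹ * mm.1 * x)
          (show x⁻¹ * g₂ * x = x⁻¹ * g₂ * x⁻¹⁻¹ by group) h2x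
      rw [dif_pos h1x, dif_pos h2x, dif_pos (⟨c1, c2⟩ : _ ∧ _)]
      refine HKR.trace_map_congr H ρ
        (Subtype.ext (show x⁻¹ * g₁ * x = x⁻¹ * g₁ * x⁻¹⁻¹ by group)) _ _ ?_
      show x⁻¹ * g₂ * x = x⁻¹ * g₂ * x⁻¹⁻¹
      group
    · rw [dif_pos h1x, dif_neg h2x, dif_neg (fun hand => h2x
        (HKR.memconv H (show x⁻¹ * g₂ * x⁻¹⁻¹ = x⁻¹ * mm.1 * x from
          show x⁻¹ * g₂ * x⁻¹⁻¹ = x⁻¹ * g₂ * x by group) hand.2))]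
  · rw [dif_neg h1x, dif_neg (fun hand => h1x
      (HKR.memconv H (show x⁻¹ * g₁ * x⁻¹⁻¹ = x⁻¹ * g₁ * x by group) hand.1))]
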